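/- arXiv:1509.07946 — 2 statements merged into one kernel-verified Lean document; each statement's English description precedes it below -/
import Mathlib

section
/- For an infinite exchangeable sequence {X_l} of bounded random variables with sample averages η_N converging a.s. to η, the limit η is a.s. constant if and only if Cov(X_1, X_2) = 0. -/
/-!
Write `m = E[X₀]`, `s = E[X₀²]` and `q = E[X₀X₁]`. Exchangeability makes every `E[Xᵢ]` equal to
`m`, every `E[Xᵢ²]` equal to `s` and every `E[XᵢXⱼ]` with `i ≠ j` equal to `q`, so the average
`η_N` has `E[η_N] = m` and `E[η_N²] = q + (s - q) / N`. The averages are bounded uniformly, so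
dominated convergence gives `E[η] = m` and `E[η²] = q`, i.e. `Var η = Cov(X₀, X₁)`; and a bounded
random variable is a.s. constant exactly when its variance vanishes.
-/

open MeasureTheory ProbabilityTheory Filter Finset Topology

section

variable {Ω β : Type*} [MeasurableSpace Ω] [MeasurableSpace β] {μ : Measure Ω}

def Exchangeable (X : ℕ → Ω → β) (μ : Measure Ω) : Prop :=
  ∀ (n : ℕ) (σ : Equiv.Perm (Fin n)),
    μ.map (fun ω (i : Fin n) => X (σ i) ω) = μ.map (fun ω (i : Fin n) => X i ω)

namespace Exchangeable

variable {X : ℕ → Ω → β} (hX : Exchangeable X μ) (hXm : ∀ l, Measurable (X l))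
include hX hXm

theorem integral_comp_perm {n : ℕ} (σ : Equiv.Perm (Fin n)) {g : (Fin n → β) → ℝ}
    (hg : Measurable g) : ∫ ω, g (fun i => X (σ i) ω) ∂μ = ∫ ω, g (fun i => X i ω) ∂μ := by
  have hmeas : ∀ k : Fin n → ℕ, AEMeasurable (fun ω i => X (k i) ω) μ := fun k =>
    (measurable_pi_lambda _ fun i => hXm (k i)).aemeasurable
  rw [← integral_map (hmeas _) hg.aestronglyMeasurable, hX n σ,
    integral_map (hmeas _) hg.aestronglyMeasurable]

theorem integral_comp_of_injective {m : ℕ} {k : Fin m → ℕ} (hk : k.Injective)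
    {g : (Fin m → β) → ℝ} (hg : Measurable g) :
    ∫ ω, g (fun r => X (k r) ω) ∂μ = ∫ ω, g (fun r => X r ω) ∂μ := by
  obtain ⟨M, hM⟩ := Finite.exists_le k
  have hk_lt : ∀ r, k r < M + 1 + m := fun r => by have := hM r; omega
  obtain ⟨σ, hσ⟩ := Equiv.Perm.exists_extending_pair (Fin.castLE (by omega : m ≤ M + 1 + m))
    (fun r => ⟨k r, hk_lt r⟩) (Fin.castLE_injective _)
    (fun r s h => hk (congrArg Fin.val h))
  have hg' : Measurable fun v : Fin (M + 1 + m) → β => g (fun r => v (Fin.castLE (by omega) r)) :=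
    hg.comp (measurable_pi_lambda _ fun r => measurable_pi_apply _)
  have := hX.integral_comp_perm hXm σ hg'
  simpa only [hσ, Fin.val_castLE] using this

theorem integral_comp_eq {f : β → ℝ} (hf : Measurable f) (i : ℕ) :
    ∫ ω, f (X i ω) ∂μ = ∫ ω, f (X 0 ω) ∂μ :=
  hX.integral_comp_of_injective hXm (k := ![i]) (Function.injective_of_subsingleton _)
    (hf.comp (measurable_pi_apply 0))

theorem integral_comp₂_eq {f : β → β → ℝ} (hf : Measurable (Function.uncurry f)) {i j : ℕ}
    (hij : i ≠ j) : ∫ ω, f (X i ω) (X j ω) ∂μ = ∫ ω, f (X 0 ω) (X 1 ω) ∂μ :=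
  hX.integral_comp_of_injective hXm (k := ![i, j])
    (by intro a b; fin_cases a <;> fin_cases b <;> simp [hij, hij.symm])
    (hf.comp ((measurable_pi_apply 0).prodMk (measurable_pi_apply 1)))

end Exchangeable

end

theorem abs_average_le {x : ℕ → ℝ} {C : ℝ} (hx : ∀ l, |x l| ≤ C) (N : ℕ) :
    |(∑ l ∈ range N, x l) / N| ≤ C := by
  rcases N.eq_zero_or_pos with rfl | hN
  · simpa using (abs_nonneg _).trans (hx 0)
  have hN' : (0 : ℝ) < N := by exact_mod_cast hN
  rw [abs_div, Nat.abs_cast, div_le_iff₀ hN']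
  calc |∑ l ∈ range N, x l| ≤ ∑ l ∈ range N, |x l| := abs_sum_le_sum_abs _ _
    _ ≤ ∑ l ∈ range N, C := sum_le_sum fun l _ => hx l
    _ = C * N := by simp [mul_comm]

section

variable {Ω : Type*} [MeasurableSpace Ω] {μ : Measure Ω} {X : ℕ → Ω → ℝ} {N : ℕ}

theorem integral_average {m : ℝ} (hint : ∀ l, Integrable (X l) μ) (hmean : ∀ l, ∫ ω, X l ω ∂μ = m)
    (hN : N ≠ 0) : ∫ ω, (∑ l ∈ range N, X l ω) / N ∂μ = m := by
  rw [integral_div, integral_finsetSum _ fun l _ => hint l, sum_congr rfl fun l _ => hmean l,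
    sum_const, card_range, nsmul_eq_mul, mul_div_cancel_left₀ _ (Nat.cast_ne_zero.2 hN)]

theorem integral_average_sq {s q : ℝ} (hint : ∀ i j, Integrable (fun ω => X i ω * X j ω) μ)
    (hdiag : ∀ i, ∫ ω, X i ω * X i ω ∂μ = s)
    (hoff : ∀ i j, i ≠ j → ∫ ω, X i ω * X j ω ∂μ = q) (hN : N ≠ 0) :
    ∫ ω, ((∑ l ∈ range N, X l ω) / N) ^ 2 ∂μ = q + (s - q) / N := by
  have hpair : ∀ i j, ∫ ω, X i ω * X j ω ∂μ = q + if i = j then s - q else 0 := by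
    intro i j
    split_ifs with h
    · rw [h, hdiag]; ring
    · rw [hoff i j h, add_zero]
  simp_rw [div_pow, sq, sum_mul_sum]
  rw [integral_div, integral_finsetSum _ fun i _ => integrable_finsetSum _ fun j _ => hint i j]
  simp_rw [integral_finsetSum _ fun j _ => hint _ j, hpair, sum_add_distrib, sum_ite_eq,
    sum_const, card_range, nsmul_eq_mul]
  rw [sum_congr rfl fun i hi => if_pos hi, sum_const, card_range, nsmul_eq_mul]
  field_simp

theorem integral_eq_of_tendsto_ae_of_abs_le [IsFiniteMeasure μ] {F : ℕ → Ω → ℝ} {f : Ω → ℝ}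
    {C L : ℝ} (hF : ∀ N, AEStronglyMeasurable (F N) μ) (hbdd : ∀ N, ∀ᵐ ω ∂μ, |F N ω| ≤ C)
    (hlim : ∀ᵐ ω ∂μ, Tendsto (F · ω) atTop (𝓝 (f ω)))
    (hL : Tendsto (fun N => ∫ ω, F N ω ∂μ) atTop (𝓝 L)) : ∫ ω, f ω ∂μ = L :=
  tendsto_nhds_unique
    (tendsto_integral_of_dominated_convergence (fun _ => C) hF (integrable_const C) hbdd hlim) hL

theorem exists_ae_eq_const_iff_variance_eq_zero [IsProbabilityMeasure μ] {Y : Ω → ℝ}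
    (hY : MemLp Y 2 μ) : (∃ c, ∀ᵐ ω ∂μ, Y ω = c) ↔ Var[Y; μ] = 0 := by
  refine ⟨fun ⟨c, hc⟩ => ?_, fun h => ⟨_, ae_eq_integral_of_variance_eq_zero hY h⟩⟩
  rw [variance_congr hc, variance_eq_integral aemeasurable_const]
  simp

variable {η : Ω → ℝ} {C : ℝ} (hbdd : ∀ l, ∀ᵐ ω ∂μ, |X l ω| ≤ C)
  (hconv : ∀ᵐ ω ∂μ, Tendsto (fun N : ℕ => (∑ l ∈ range N, X l ω) / N) atTop (𝓝 (η ω)))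
include hbdd hconv

theorem abs_le_of_tendsto_average : ∀ᵐ ω ∂μ, |η ω| ≤ C := by
  filter_upwards [ae_all_iff.2 hbdd, hconv] with ω hω hlim
  exact le_of_tendsto hlim.abs (Eventually.of_forall (abs_average_le hω))

theorem memLp_of_tendsto_average [IsFiniteMeasure μ] (hXm : ∀ l, Measurable (X l))
    (p : ENNReal) : MemLp η p μ :=
  MemLp.of_bound (aestronglyMeasurable_of_tendsto_ae atTop (fun N => by fun_prop) hconv) C
    (abs_le_of_tendsto_average hbdd hconv)

namespace Exchangeable

variable (hX : Exchangeable X μ) (hXm : ∀ l, Measurable (X l))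
include hX hXm

theorem integral_limit_average [IsFiniteMeasure μ] : ∫ ω, η ω ∂μ = ∫ ω, X 0 ω ∂μ := by
  have hint : ∀ l, Integrable (X l) μ := fun l =>
    .of_bound (hXm l).aestronglyMeasurable C (hbdd l)
  refine integral_eq_of_tendsto_ae_of_abs_le (fun N => by fun_prop)
    (fun N => (ae_all_iff.2 hbdd).mono fun ω h => abs_average_le h N) hconv
    (tendsto_const_nhds.congr' ?_)
  filter_upwards [eventually_ne_atTop 0] with N hN
  exact (integral_average hint (hX.integral_comp_eq hXm measurable_id) hN).symm

theorem integral_sq_limit_average [IsFiniteMeasure μ] :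
    ∫ ω, η ω ^ 2 ∂μ = ∫ ω, X 0 ω * X 1 ω ∂μ := by
  have hint : ∀ i j, Integrable (fun ω => X i ω * X j ω) μ := fun i j =>
    .of_bound (by fun_prop) (C * C) <| (hbdd i).and (hbdd j) |>.mono fun ω h => by
      rw [Real.norm_eq_abs, abs_mul]
      exact mul_le_mul h.1 h.2 (abs_nonneg _) ((abs_nonneg _).trans h.1)
  refine integral_eq_of_tendsto_ae_of_abs_le (C := C ^ 2) (fun N => by fun_prop)
    (fun N => (ae_all_iff.2 hbdd).mono fun ω h => ?_) (hconv.mono fun ω h => h.pow 2) ?_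
  · rw [abs_pow]
    exact pow_le_pow_left₀ (abs_nonneg _) (abs_average_le h N) 2
  have hlim : Tendsto (fun N : ℕ => ∫ ω, X 0 ω * X 1 ω ∂μ +
      (∫ ω, X 0 ω * X 0 ω ∂μ - ∫ ω, X 0 ω * X 1 ω ∂μ) / N) atTop
      (𝓝 (∫ ω, X 0 ω * X 1 ω ∂μ)) := by
    simpa using (tendsto_const_div_atTop_nhds_zero_nat (𝕜 := ℝ) _).const_add _
  refine hlim.congr' ?_
  filter_upwards [eventually_ne_atTop 0] with N hN
  exact (integral_average_sq hint (hX.integral_comp_eq hXm (f := fun x => x * x) (by fun_prop))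
    (fun i j => hX.integral_comp₂_eq hXm measurable_mul) hN).symm

theorem variance_limit_average [IsProbabilityMeasure μ] :
    Var[η; μ] = ∫ ω, X 0 ω * X 1 ω ∂μ - (∫ ω, X 0 ω ∂μ) ^ 2 := by
  rw [variance_eq_sub (memLp_of_tendsto_average hbdd hconv hXm 2)]
  simp only [Pi.pow_apply]
  rw [hX.integral_sq_limit_average hbdd hconv hXm, hX.integral_limit_average hbdd hconv hXm]

end Exchangeable

end

theorem stmt5_general
    {Ω : Type*} [MeasureSpace Ω] [IsProbabilityMeasure (ℙ : Measure Ω)]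
    (gmin gmax : ℝ)
    (X : ℕ → Ω → ℝ) (η : Ω → ℝ)
    (hXmeas : ∀ l, Measurable (X l))
    (hXbdd : ∀ l, ∀ᵐ ω ∂ℙ, gmin ≤ X l ω ∧ X l ω ≤ gmax)
    (hexch : ∀ (n : ℕ) (σ : Equiv.Perm (Fin n)),
        Measure.map (fun ω => fun i : Fin n => X (σ i) ω) ℙ =
          Measure.map (fun ω => fun i : Fin n => X (i : ℕ) ω) ℙ)
    (hconv : ∀ᵐ ω ∂ℙ, Tendsto (fun N : ℕ => (∑ l ∈ Finset.range N, X l ω) / (N : ℝ))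
        atTop (nhds (η ω))) :
    (∃ c : ℝ, ∀ᵐ ω ∂ℙ, η ω = c) ↔
      (∫ ω, X 0 ω * X 1 ω ∂ℙ) - (∫ ω, X 0 ω ∂ℙ) * (∫ ω, X 1 ω ∂ℙ) = 0 := by
  have hX : Exchangeable X ℙ := hexch
  have hbdd : ∀ l, ∀ᵐ ω ∂ℙ, |X l ω| ≤ max |gmin| |gmax| := fun l =>
    (hXbdd l).mono fun ω h => abs_le_max_abs_abs h.1 h.2
  have hmean : ∫ ω, X 1 ω ∂ℙ = ∫ ω, X 0 ω ∂ℙ := hX.integral_comp_eq hXmeas measurable_id 1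
  rw [hmean, ← sq, ← hX.variance_limit_average hbdd hconv hXmeas]
  exact exists_ae_eq_const_iff_variance_eq_zero (memLp_of_tendsto_average hbdd hconv hXmeas 2)

/-- For an infinite exchangeable sequence of bounded random variables whose sample averages
converge a.s. to `η`, the limit `η` is a.s. constant iff `Cov(X_1, X_2) = 0`. -/
theorem stmt5
    {Ω : Type*} [MeasureSpace Ω] [IsProbabilityMeasure (ℙ : Measure Ω)]
    (gmin gmax : ℝ) (hgmin : 0 < gmin) (hg : gmin ≤ gmax)
    (X : ℕ → Ω → ℝ) (η : Ω → ℝ)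
    (hXmeas : ∀ l, Measurable (X l)) (hηmeas : Measurable η)
    (hXbdd : ∀ l, ∀ᵐ ω ∂ℙ, gmin ≤ X l ω ∧ X l ω ≤ gmax)
    (hexch : ∀ (n : ℕ) (σ : Equiv.Perm (Fin n)),
        Measure.map (fun ω => fun i : Fin n => X (σ i) ω) ℙ =
          Measure.map (fun ω => fun i : Fin n => X (i : ℕ) ω) ℙ)
    (hconv : ∀ᵐ ω ∂ℙ, Tendsto (fun N : ℕ => (∑ l ∈ Finset.range N, X l ω) / (N : ℝ))
        atTop (nhds (η ω))) :
    (∃ c : ℝ, ∀ᵐ ω ∂ℙ, η ω = c) ↔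
      (∫ ω, X 0 ω * X 1 ω ∂ℙ) - (∫ ω, X 0 ω ∂ℙ) * (∫ ω, X 1 ω ∂ℙ) = 0 :=
  stmt5_general gmin gmax X η hXmeas hXbdd hexch hconv
end

section
/- Let A be an exchangeable random sequence in S^∞ and let Φ_m(A) be the random vector of r = k·i elements obtained by sampling r coordinates of A uniformly with replacement from the first m coordinates, and Φ_∞(A) = π_r(A) the first r coordinates. Then the total variation distance between the laws of Φ_m(A) and Φ_∞(A) is at most 1 − p(m), where p(m) = m(m−1)⋯(m−r+1)/m^r. Consequently sup over all such A of this distance tends to 0 as m → ∞. -/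
/-!
Sampling `r` of the first `m` coordinates uniformly with replacement amounts to averaging the
law of `(A_{f 1}, …, A_{f r})` over all `m ^ r` index maps `f`. For each of the
`m (m - 1) ⋯ (m - r + 1)` injective maps `f`, exchangeability makes this law equal to the law
of `(A_1, …, A_r)`; each of the remaining maps moves the probability of a set by at most `1`.
Hence the two laws differ by at most the proportion `1 - p(m)` of non-injective maps, and
`p(m) = ∏_{j < r} (1 - j / m) → 1`.
-/

open MeasureTheory ProbabilityTheory Filter

variable {Ω S : Type*} [MeasureSpace Ω] [MeasurableSpace S]

/-- A random sequence is exchangeable: the law of every finite initial block is invariant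
under permutations of coordinates. -/
def ExchangeableSeq (A : Ω → ℕ → S) : Prop :=
  ∀ (n : ℕ) (σ : Equiv.Perm (Fin n)),
    Measure.map (fun ω => fun i : Fin n => A ω ((σ i : Fin n) : ℕ)) (ℙ : Measure Ω) =
      Measure.map (fun ω => fun i : Fin n => A ω (i : ℕ)) (ℙ : Measure Ω)

/-- The law of `Φ_m(A)`: sample `r` coordinates of `A` uniformly with replacement from the
first `m` coordinates, independently of `A`. -/
noncomputable def sampleLaw (A : Ω → ℕ → S) (r m : ℕ) : Measure (Fin r → S) :=
  ((m : ENNReal) ^ r)⁻¹ •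
    ∑ f : Fin r → Fin m, Measure.map (fun ω => fun j : Fin r => A ω ((f j : Fin m) : ℕ))
      (ℙ : Measure Ω)

open Finset Topology

lemma Nat.cast_descFactorial_eq_prod_range_sub {R : Type*} [CommRing R] (m r : ℕ) :
    (m.descFactorial r : R) = ∏ j ∈ range r, ((m : R) - j) := by
  rw [← descPochhammer_eval_eq_descFactorial, descPochhammer_eval_eq_prod_range]

lemma card_filter_injective_fin (r m : ℕ) :
    #{f : Fin r → Fin m | Function.Injective f} = m.descFactorial r := by
  rw [← Fintype.card_subtype,
    Fintype.card_congr (Equiv.subtypeInjectiveEquivEmbedding (Fin r) (Fin m)),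
    Fintype.card_embedding_eq, Fintype.card_fin, Fintype.card_fin]

lemma abs_sum_div_card_sub_le {ι : Type*} [Fintype ι] [Nonempty ι] (G : Finset ι)
    (x : ι → ℝ) (y : ℝ) (hx : ∀ i, |x i - y| ≤ 1) (hG : ∀ i ∈ G, x i = y) :
    |(∑ i, x i) / Fintype.card ι - y| ≤ 1 - #G / Fintype.card ι := by
  classical
  have hn : (0 : ℝ) < Fintype.card ι := by exact_mod_cast Fintype.card_pos
  have hsum : ∑ i, (x i - y) = ∑ i ∈ Gᶜ, (x i - y) := by
    rw [← sum_compl_add_sum G, sum_eq_zero fun i hi => sub_eq_zero.2 (hG i hi), add_zero]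
  have havg : (∑ i, x i) / Fintype.card ι - y = (∑ i ∈ Gᶜ, (x i - y)) / Fintype.card ι := by
    rw [← hsum, sum_sub_distrib, sum_const, card_univ, nsmul_eq_mul]
    field_simp
  have hbound : |∑ i ∈ Gᶜ, (x i - y)| ≤ #Gᶜ :=
    (abs_sum_le_sum_abs _ _).trans (by simpa using sum_le_sum fun i (_ : i ∈ Gᶜ) => hx i)
  calc |(∑ i, x i) / Fintype.card ι - y|
      = |∑ i ∈ Gᶜ, (x i - y)| / Fintype.card ι := by rw [havg, abs_div, abs_of_pos hn]
    _ ≤ #Gᶜ / Fintype.card ι := by gcongr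
    _ = 1 - #G / Fintype.card ι := by
        rw [card_compl, Nat.cast_sub (card_le_univ G)]
        field_simp

lemma abs_toReal_uniform_mixture_sub_le {α ι : Type*} [MeasurableSpace α] [Fintype ι]
    [Nonempty ι] (μ : ι → Measure α) [∀ i, IsProbabilityMeasure (μ i)] (ν : Measure α)
    [IsProbabilityMeasure ν] (G : Finset ι) (hG : ∀ i ∈ G, μ i = ν) (B : Set α) :
    |((((Fintype.card ι : ENNReal))⁻¹ • ∑ i, μ i) B).toReal - (ν B).toReal|
      ≤ 1 - #G / Fintype.card ι := by
  have hmix : ((((Fintype.card ι : ENNReal))⁻¹ • ∑ i, μ i) B).toReal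
      = (∑ i, (μ i B).toReal) / Fintype.card ι := by
    rw [Measure.smul_apply, Measure.finsetSum_apply, smul_eq_mul, ENNReal.toReal_mul,
      ENNReal.toReal_sum fun i _ => measure_ne_top _ _, ENNReal.toReal_inv,
      ENNReal.toReal_natCast, inv_mul_eq_div]
  rw [hmix]
  refine abs_sum_div_card_sub_le G _ _ (fun i => ?_) fun i hi => by rw [hG i hi]
  exact abs_sub_le_of_nonneg_of_le ENNReal.toReal_nonneg measureReal_le_one ENNReal.toReal_nonneg
    measureReal_le_one

lemma ExchangeableSeq.map_comp_injective {A : Ω → ℕ → S} (hA : Measurable A)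
    (hE : ExchangeableSeq A) {r m : ℕ} (f : Fin r → Fin m) (hf : Function.Injective f) :
    Measure.map (fun ω (j : Fin r) => A ω (f j : ℕ)) (ℙ : Measure Ω)
      = Measure.map (fun ω (j : Fin r) => A ω (j : ℕ)) (ℙ : Measure Ω) := by
  have hrm : r ≤ m := by simpa using Fintype.card_le_of_injective f hf
  obtain ⟨σ, hσ⟩ :=
    Equiv.Perm.exists_extending_pair (Fin.castLE hrm) f (Fin.castLE_injective hrm) hf
  have key := congrArg (Measure.map fun (g : Fin m → S) (j : Fin r) => g (Fin.castLE hrm j))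
    (hE m σ)
  rw [Measure.map_map (by fun_prop) (by fun_prop), Measure.map_map (by fun_prop) (by fun_prop)]
    at key
  convert key using 2 <;> funext ω j <;> simp [hσ]

lemma tendsto_one_sub_prod_range_sub_div_pow (r : ℕ) :
    Tendsto (fun m : ℕ => 1 - (∏ j ∈ range r, ((m : ℝ) - j)) / (m : ℝ) ^ r) atTop (𝓝 0) := by
  have hfac : ∀ᶠ m : ℕ in atTop,
      ∏ j ∈ range r, (1 - (j : ℝ) / m) = (∏ j ∈ range r, ((m : ℝ) - j)) / (m : ℝ) ^ r := by
    filter_upwards [eventually_ne_atTop 0] with m hm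
    rw [show (m : ℝ) ^ r = ∏ _j ∈ range r, (m : ℝ) by simp, ← prod_div_distrib]
    refine prod_congr rfl fun j _ => ?_
    field_simp
  have hlim : Tendsto (fun m : ℕ => ∏ j ∈ range r, (1 - (j : ℝ) / m)) atTop (𝓝 1) := by
    simpa using tendsto_finsetProd (range r) fun j _ =>
      (tendsto_const_nhds (x := (1 : ℝ))).sub (tendsto_const_div_atTop_nhds_zero_nat (j : ℝ))
  simpa using (tendsto_const_nhds (x := (1 : ℝ))).sub (hlim.congr' hfac)

theorem stmt18_general
    [IsProbabilityMeasure (ℙ : Measure Ω)] (r : ℕ) :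
    (∀ (A : Ω → ℕ → S), Measurable A → ExchangeableSeq A →
      ∀ m : ℕ, r ≤ m → ∀ B : Set (Fin r → S), MeasurableSet B →
        |(sampleLaw A r m B).toReal -
            ((Measure.map (fun ω => fun j : Fin r => A ω (j : ℕ)) (ℙ : Measure Ω)) B).toReal|
          ≤ 1 - (∏ j ∈ Finset.range r, ((m : ℝ) - (j : ℝ))) / ((m : ℝ) ^ r)) ∧
    Tendsto (fun m : ℕ => 1 - (∏ j ∈ Finset.range r, ((m : ℝ) - (j : ℝ))) / ((m : ℝ) ^ r))
      atTop (nhds 0) := by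
  refine ⟨fun A hA hE m hrm B _ => ?_, tendsto_one_sub_prod_range_sub_div_pow r⟩
  have : Nonempty (Fin r → Fin m) := ⟨Fin.castLE hrm⟩
  have : ∀ k : Fin r → ℕ, IsProbabilityMeasure (Measure.map (fun ω j => A ω (k j)) ℙ) :=
    fun k => Measure.isProbabilityMeasure_map (by fun_prop)
  have hbound := abs_toReal_uniform_mixture_sub_le
    (fun f : Fin r → Fin m => Measure.map (fun ω j => A ω (f j : ℕ)) ℙ)
    (Measure.map (fun ω j => A ω (j : ℕ)) ℙ) {f | Function.Injective f}
    (fun f hf => hE.map_comp_injective hA f (mem_filter.1 hf).2) B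
  rwa [card_filter_injective_fin, Nat.cast_descFactorial_eq_prod_range_sub, Fintype.card_fun,
    Fintype.card_fin, Fintype.card_fin, Nat.cast_pow, Nat.cast_pow] at hbound

/-- For an exchangeable random sequence `A`, the total variation distance between the law of
`Φ_m(A)` (sampling `r` of the first `m` coordinates uniformly with replacement) and the law
of `π_r(A)` (the first `r` coordinates) is at most `1 − p(m)` where
`p(m) = m(m−1)⋯(m−r+1)/m^r`; consequently, uniformly over all such `A`, this distance tends
to `0` as `m → ∞`. -/
theorem stmt18
    [IsProbabilityMeasure (ℙ : Measure Ω)] (r : ℕ) (hr : 0 < r) :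
    (∀ (A : Ω → ℕ → S), Measurable A → ExchangeableSeq A →
      ∀ m : ℕ, r ≤ m → ∀ B : Set (Fin r → S), MeasurableSet B →
        |(sampleLaw A r m B).toReal -
            ((Measure.map (fun ω => fun j : Fin r => A ω (j : ℕ)) (ℙ : Measure Ω)) B).toReal|
          ≤ 1 - (∏ j ∈ Finset.range r, ((m : ℝ) - (j : ℝ))) / ((m : ℝ) ^ r)) ∧
    Tendsto (fun m : ℕ => 1 - (∏ j ∈ Finset.range r, ((m : ℝ) - (j : ℝ))) / ((m : ℝ) ^ r))
      atTop (nhds 0) :=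
  stmt18_general r
end
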